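/- Let t be a triple pattern (an element of (I∪L∪V) × (I∪V) × (I∪L∪V), possibly with repeated variables) and D an RDF dataset encoded by the relation Quads. Then for every graph identifier j, the tuples with G-attribute equal to j in the bag-semantics evaluation of the translated expression ⟪t⟫^G (selection of Quads by the constant components and by equality of columns for repeated variables, renaming gid to G and one column per distinct variable of t, and projection on G and var(t)) occur without duplicates and are in one-to-one correspondence with the solution mappings μ such that dom(μ) = var(t) and μ(t) ∈ G_j; in particular their number equals the number of triples of G_j matching t. -/

import Mathlib

/-!
Core formalization of SPARQL 1.1 multiset semantics and of the paper's
translation of SPARQL graph patterns into bag-semantics relational algebra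
over the base relations `Graphs` and `Quads`.

Tuples of a translated expression `⟪P⟫^G` (whose attributes are the graph
attribute `G` together with the in-scope variables `var(P)`) are encoded as
pairs `(j, μ) : ℕ × SolMap`, where `j` is the value of the graph attribute and
`μ v = some t` means the attribute `v` holds the RDF term `t`, while
`μ v = none` means the attribute `v` holds the distinguished value `unb`.
-/

noncomputable section
open Classical

/-- RDF terms: IRIs, blank nodes and literals. -/
inductive RDFTerm where
  | iri : String → RDFTerm
  | blank : String → RDFTerm
  | lit : String → RDFTerm
deriving DecidableEq

abbrev Var := String
abbrev Triple := RDFTerm × RDFTerm × RDFTerm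
/-- A graph is a set of triples (no duplicates). -/
abbrev RDFGraph := Finset Triple

/-- An RDF dataset: a default graph and named graphs with pairwise distinct IRIs. -/
structure Dataset where
  dflt : RDFGraph
  named : List (String × RDFGraph)
  distinctNames : (named.map Prod.fst).Nodup

instance : Zero (Option RDFTerm) := ⟨none⟩

/-- A solution mapping: a partial function from variables to RDF terms
(finitely supported; `none` = the variable is unbound / attribute value `unb`). -/
abbrev SolMap := Var →₀ Option RDFTerm

/-- Domain of a solution mapping. -/
def dom (μ : SolMap) : Finset Var := μ.support

/-- Two solution mappings are compatible if they agree on their common domain. -/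
def compatible (μ1 μ2 : SolMap) : Prop := ∀ v ∈ dom μ1 ∩ dom μ2, μ1 v = μ2 v

/-- Union (merge) of two solution mappings; pointwise, this is the function
`first` of the paper: take the first value that is not `unb`. -/
def munion (μ1 μ2 : SolMap) : SolMap :=
  Finsupp.zipWith (fun a b => a.orElse (fun _ => b)) rfl μ1 μ2

/-- SPARQL Join of two multisets of solution mappings:
`Ω1 ⋈ Ω2 = {| μ1 ∪ μ2 : μ1 ∈ Ω1, μ2 ∈ Ω2, μ1 and μ2 compatible |}`. -/
def mJoin (Ω1 Ω2 : Multiset SolMap) : Multiset SolMap :=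
  Ω1.bind fun μ1 => (Ω2.filter fun μ2 => compatible μ1 μ2).map fun μ2 => munion μ1 μ2

/-- A component of a triple pattern: an RDF term or a variable. -/
inductive TP where
  | term : RDFTerm → TP
  | var : Var → TP
deriving DecidableEq

mutual
/-- SPARQL graph patterns.  `opt P1 P2 R` is `(P1 OPTIONAL (P2 FILTER R))`;
plain `OPTIONAL` is recovered with `R = FilterExpr.tt`. -/
inductive Pattern where
  | empty : Pattern
  | triple : TP → TP → TP → Pattern
  | and : Pattern → Pattern → Pattern
  | union : Pattern → Pattern → Pattern
  | minus : Pattern → Pattern → Pattern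
  | opt : Pattern → Pattern → FilterExpr → Pattern
  | filter : Pattern → FilterExpr → Pattern
  | graphIRI : String → Pattern → Pattern
  | graphVar : Var → Pattern → Pattern

/-- SPARQL filter expressions; `base` is an abstract boolean condition on the
current solution mapping, `ex`/`nex` are `EXISTS`/`NOT EXISTS` patterns. -/
inductive FilterExpr where
  | tt : FilterExpr
  | base : (SolMap → Prop) → FilterExpr
  | ex : Pattern → FilterExpr
  | nex : Pattern → FilterExpr
  | fand : FilterExpr → FilterExpr → FilterExpr
  | forr : FilterExpr → FilterExpr → FilterExpr
  | fnot : FilterExpr → FilterExpr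
end

def varTP : TP → Finset Var
  | .term _ => ∅
  | .var v => {v}

/-- In-scope variables `var(P)` of a graph pattern. -/
def varP : Pattern → Finset Var
  | .empty => ∅
  | .triple s p o => varTP s ∪ varTP p ∪ varTP o
  | .and P1 P2 => varP P1 ∪ varP P2
  | .union P1 P2 => varP P1 ∪ varP P2
  | .minus P1 _ => varP P1
  | .opt P1 P2 _ => varP P1 ∪ varP P2
  | .filter P1 _ => varP P1
  | .graphIRI _ P1 => varP P1
  | .graphVar v P1 => insert v (varP P1)

/-- Substitution of a solution mapping in a triple-pattern component. -/
def substTP (μ : SolMap) : TP → TP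
  | .term a => .term a
  | .var v =>
      match μ v with
      | some t => .term t
      | none => .var v

/-- Unification of a triple-pattern component with an RDF term, extending a
solution mapping (handles repeated variables). -/
def unify : TP → RDFTerm → SolMap → Option SolMap
  | .term a, b, μ => if a = b then some μ else none
  | .var v, b, μ =>
      match μ v with
      | none => some (Finsupp.update μ v (some b))
      | some c => if c = b then some μ else none

/-- Matching a triple pattern against a triple: returns the unique solution
mapping `μ` with `dom μ = var(t)` and `μ(t) = tr`, if it exists. -/
def matchT (s p o : TP) (tr : Triple) : Option SolMap :=
  (unify s tr.1 0).bind fun μ1 => (unify p tr.2.1 μ1).bind fun μ2 => unify o tr.2.2 μ2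

/-- Number of named graphs of the dataset; graph identifiers are `0, …, nGraphs D`. -/
def nGraphs (D : Dataset) : ℕ := D.named.length

/-- The graph with identifier `j` (`0` is the default graph). -/
def graphAt (D : Dataset) : ℕ → RDFGraph
  | 0 => D.dflt
  | Nat.succ k => ((D.named[k]?).map Prod.snd).getD ∅

/-- The graph identifier of the named graph with IRI `u`, if any. -/
def gidOf (D : Dataset) (u : String) : Option ℕ :=
  (D.named.findIdx? (fun x => x.1 = u)).map (· + 1)

/-- The named graphs of the dataset, enumerated with their identifiers. -/
def namedEnum (D : Dataset) : List (ℕ × String) :=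
  D.named.zipIdx.map fun p => (p.2 + 1, p.1.1)

mutual
/-- SPARQL 1.1 evaluation `⟦pre(P)⟧_{D(G_g)}` of the graph pattern `P`,
pre-instantiated by the substitution `pre` (needed for `EXISTS`),
over the dataset `D` with active graph `G_g`.  The plain evaluation
`⟦P⟧_{D(G_g)}` is `evalPat D 0 g P`. -/
def evalPat (D : Dataset) (pre : SolMap) : ℕ → Pattern → Multiset SolMap
  | _, .empty => {0}
  | g, .triple s p o =>
      (graphAt D g).val.filterMap fun tr =>
        matchT (substTP pre s) (substTP pre p) (substTP pre o) tr
  | g, .and P1 P2 => mJoin (evalPat D pre g P1) (evalPat D pre g P2)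
  | g, .union P1 P2 => evalPat D pre g P1 + evalPat D pre g P2
  | g, .minus P1 P2 =>
      (evalPat D pre g P1).filter fun μ1 =>
        ∀ μ2 ∈ evalPat D pre g P2, ¬ compatible μ1 μ2 ∨ dom μ1 ∩ dom μ2 = ∅
  | g, .opt P1 P2 R =>
      ((mJoin (evalPat D pre g P1) (evalPat D pre g P2)).filter fun μ => satF D pre g R μ)
      + ((evalPat D pre g P1).filter fun μ1 =>
          ∀ μ2 ∈ evalPat D pre g P2,
            ¬ compatible μ1 μ2 ∨ (compatible μ1 μ2 ∧ ¬ satF D pre g R (munion μ1 μ2)))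
  | g, .filter P1 R => (evalPat D pre g P1).filter fun μ => satF D pre g R μ
  | _, .graphIRI u P1 =>
      match gidOf D u with
      | some i => evalPat D pre i P1
      | none => 0
  | g, .graphVar v P1 =>
      match pre v with
      | some (RDFTerm.iri u) =>
          (match gidOf D u with
           | some i => evalPat D pre i P1
           | none => 0)
      | some _ => 0
      | none =>
          (↑(namedEnum D) : Multiset (ℕ × String)).bind fun p =>
            mJoin (evalPat D pre p.1 P1) {Finsupp.single v (some (RDFTerm.iri p.2))}
termination_by g P => sizeOf P

/-- Satisfaction `μ ⊨_{D(G_g)} R` of a filter expression by a solution mapping,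
under the pre-instantiation `pre`; `EXISTS(P)` holds iff `⟦μ(P)⟧_{D(G_g)}`
is a non-empty multiset. -/
def satF (D : Dataset) (pre : SolMap) : ℕ → FilterExpr → SolMap → Prop
  | _, .tt, _ => True
  | _, .base f, μ => f μ
  | g, .ex P, μ => evalPat D (munion pre μ) g P ≠ 0
  | g, .nex P, μ => evalPat D (munion pre μ) g P = 0
  | g, .fand R1 R2, μ => satF D pre g R1 μ ∧ satF D pre g R2 μ
  | g, .forr R1 R2, μ => satF D pre g R1 μ ∨ satF D pre g R2 μ
  | g, .fnot R1, μ => ¬ satF D pre g R1 μ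
termination_by g R μ => sizeOf R
end

/-! ### The base relations `Graphs` and `Quads` and the relational translation -/

/-- The base relation `Graphs(gid, IRI)`: the tuple `(0, <>)` for the default
graph (no IRI) and a tuple `(i, u_i)` for each named graph. -/
def graphsRel (D : Dataset) : Multiset (ℕ × Option String) :=
  ↑((0, (none : Option String)) :: (namedEnum D).map fun p => (p.1, some p.2))

/-- The base relation `Quads(gid, sub, pred, obj)`. -/
def quadsRel (D : Dataset) : Multiset (ℕ × Triple) :=
  (graphsRel D).bind fun p => (graphAt D p.1).val.map fun tr => (p.1, tr)

/-- `⟪()⟫^G = Π_G[ρ_{G←gid}(Graphs)]`, the translation of the empty graph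
pattern (tuples have the single attribute `G`, i.e. second component `0`). -/
def unitRel (D : Dataset) : Multiset (ℕ × SolMap) := (graphsRel D).map fun p => (p.1, 0)

/-- The condition `comp`: for each common variable `v`,
`v' = unb ∨ v'' = unb ∨ v' = v''`. -/
def compCond (common : Finset Var) (μ1 μ2 : SolMap) : Prop :=
  ∀ v ∈ common, μ1 v = none ∨ μ2 v = none ∨ μ1 v = μ2 v

/-- The condition `disj`: for each common variable `v`, `v = unb ∨ v' = unb`. -/
def disjCond (common : Finset Var) (μ1 μ2 : SolMap) : Prop :=
  ∀ v ∈ common, μ1 v = none ∨ μ2 v = none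

/-- The condition `subst`: for each common variable `v`, `v = v' ∨ v = unb`. -/
def substCond (common : Finset Var) (μ μ' : SolMap) : Prop :=
  ∀ v ∈ common, μ v = μ' v ∨ μ v = none

/-- The translation of `AND`: rename the common variables apart, join on the
graph attribute, select with `comp`, and project back using `first`. -/
def transAnd (common : Finset Var) (R1 R2 : Multiset (ℕ × SolMap)) : Multiset (ℕ × SolMap) :=
  R1.bind fun t1 => R2.bind fun t2 =>
    if t1.1 = t2.1 ∧ compCond common t1.2 t2.2 then {(t1.1, munion t1.2 t2.2)} else 0

/-- Bag-semantics natural join of two relations over identical attribute sets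
(tuples join exactly with equal tuples, multiplicities multiply). -/
def bagJoinSame (A B : Multiset (ℕ × SolMap)) : Multiset (ℕ × SolMap) :=
  A.bind fun t => Multiset.replicate (B.count t) t

/-- Projection of a tuple onto a set of variable attributes. -/
def restrict (μ : SolMap) (S : Finset Var) : SolMap :=
  Finsupp.filter (fun v => v ∈ S) μ

/-- The translation of `MINUS`:
`⟪P1⟫ ⋈ [δ(⟪P1⟫) − Π_{G,var(P1)}(σ_{comp ∧ ¬disj}(⟪P1⟫ ⋈ ρ(⟪P2⟫)))]`. -/
def transMinus (common : Finset Var) (R1 R2 : Multiset (ℕ × SolMap)) : Multiset (ℕ × SolMap) :=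
  let inner := R1.bind fun t1 => R2.bind fun t2 =>
    if t1.1 = t2.1 ∧ compCond common t1.2 t2.2 ∧ ¬ disjCond common t1.2 t2.2 then {t1} else 0
  bagJoinSame R1 (R1.dedup - inner)

/-- The auxiliary expression `E_i` of the translation of `FILTER`, for an
`EXISTS`/`NOT EXISTS` subpattern with translation `Pi'`:
`Π_{G,var(P),ex_i←0}[δ(P') − Π_{G,var(P)}(σ_subst(P' ⋈ ρ(Pi')))]
 ∪ Π_{G,var(P),ex_i←1}[δ(P') − [δ(P') − Π_{G,var(P)}(σ_subst(P' ⋈ ρ(Pi')))]]`. -/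
def buildE (VP Vi : Finset Var) (P' Pi' : Multiset (ℕ × SolMap)) :
    Multiset (ℕ × SolMap × ℕ) :=
  let inner := P'.bind fun t => Pi'.bind fun t' =>
    if t.1 = t'.1 ∧ substCond (VP ∩ Vi) t.2 t'.2 then {t} else 0
  ((P'.dedup - inner).map fun t => (t.1, t.2, 0))
  + ((P'.dedup - (P'.dedup - inner)).map fun t => (t.1, t.2, 1))

/-- Evaluation of the relational condition `filter` obtained from `R`, where
the occurrences of `EXISTS(P_i)` (resp. `NOT EXISTS(P_i)`), in left-to-right
order, are replaced by `ex_i <> 0` (resp. `ex_i = 0`), the values of the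
attributes `ex_i` being supplied by the list `bs`. -/
def condEval : FilterExpr → SolMap → List ℕ → Prop × List ℕ
  | .tt, _, bs => (True, bs)
  | .base f, μ, bs => (f μ, bs)
  | .ex _, _, bs => (bs.headD 0 ≠ 0, bs.tail)
  | .nex _, _, bs => (bs.headD 0 = 0, bs.tail)
  | .fand R1 R2, μ, bs =>
      let r1 := condEval R1 μ bs
      let r2 := condEval R2 μ r1.2
      (r1.1 ∧ r2.1, r2.2)
  | .forr R1 R2, μ, bs =>
      let r1 := condEval R1 μ bs
      let r2 := condEval R2 μ r1.2
      (r1.1 ∨ r2.1, r2.2)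
  | .fnot R1, μ, bs =>
      let r1 := condEval R1 μ bs
      (¬ r1.1, r1.2)

/-- Natural join of the running relation with an auxiliary relation `E_i`
(join on the graph attribute and all the variable attributes). -/
def joinE (A : Multiset (ℕ × SolMap × List ℕ)) (E : Multiset (ℕ × SolMap × ℕ)) :
    Multiset (ℕ × SolMap × List ℕ) :=
  A.bind fun a => E.bind fun e =>
    if a.1 = e.1 ∧ a.2.1 = e.2.1 then {(a.1, a.2.1, a.2.2 ++ [e.2.2])} else 0

/-- The translation of `FILTER`:
`Π_{G,var(P)}[σ_filter(P' ⋈ E_1 ⋈ … ⋈ E_m)]`. -/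
def filterApply (P' : Multiset (ℕ × SolMap)) (Es : List (Multiset (ℕ × SolMap × ℕ)))
    (R : FilterExpr) : Multiset (ℕ × SolMap) :=
  ((Es.foldl joinE (P'.map fun t => (t.1, t.2, ([] : List ℕ)))).filter
      fun x => (condEval R x.2.1 x.2.2).1).map fun x => (x.1, x.2.1)

mutual
/-- The paper's translation `⟪P⟫^G` of a graph pattern into a bag-semantics
relational algebra expression over `Graphs` and `Quads`, evaluated;
tuples are encoded as pairs `(j, μ)` (graph attribute value, values of the
variable attributes with `none` = `unb`). -/
def transP (D : Dataset) : Pattern → Multiset (ℕ × SolMap)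
  | .empty => unitRel D
  | .triple s p o =>
      (quadsRel D).filterMap fun q => (matchT s p o q.2).map fun μ => (q.1, μ)
  | .and P1 P2 => transAnd (varP P1 ∩ varP P2) (transP D P1) (transP D P2)
  | .union P1 P2 => transP D P1 + transP D P2
  | .minus P1 P2 => transMinus (varP P1 ∩ varP P2) (transP D P1) (transP D P2)
  | .opt P1 P2 R =>
      let R1 := transP D P1
      let J := transAnd (varP P1 ∩ varP P2) R1 (transP D P2)
      let F := filterApply J (transEs D (varP P1 ∪ varP P2) J R) R
      J + bagJoinSame R1 (R1.dedup - F.map fun t => (t.1, restrict t.2 (varP P1)))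
  | .filter P1 R =>
      let P' := transP D P1
      filterApply P' (transEs D (varP P1) P' R) R
  | .graphIRI u P1 =>
      let inner : Multiset SolMap :=
        (graphsRel D).bind fun p =>
          if p.2 = some u then (transP D P1).bind (fun t => if t.1 = p.1 then {t.2} else 0)
          else 0
      (graphsRel D).bind fun p => inner.map fun μ => (p.1, μ)
  | .graphVar v P1 =>
      let inner : Multiset SolMap :=
        (graphsRel D).bind fun p =>
          match p.2 with
          | some u =>
              (transP D P1).bind fun t =>
                if t.1 = p.1 then
                  (if v ∈ varP P1 then (if t.2 v = some (RDFTerm.iri u) then {t.2} else 0)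
                   else {Finsupp.update t.2 v (some (RDFTerm.iri u))})
                else 0
          | none => 0
      (graphsRel D).bind fun p => inner.map fun μ => (p.1, μ)
termination_by P => sizeOf P

/-- The list of auxiliary expressions `E_1, …, E_m`, one for each occurrence of
`EXISTS`/`NOT EXISTS` in the filter expression, in left-to-right order. -/
def transEs (D : Dataset) (VP : Finset Var) (P' : Multiset (ℕ × SolMap)) :
    FilterExpr → List (Multiset (ℕ × SolMap × ℕ))
  | .tt => []
  | .base _ => []
  | .ex Pi => [buildE VP (varP Pi) P' (transP D Pi)]
  | .nex Pi => [buildE VP (varP Pi) P' (transP D Pi)]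
  | .fand R1 R2 => transEs D VP P' R1 ++ transEs D VP P' R2
  | .forr R1 R2 => transEs D VP P' R1 ++ transEs D VP P' R2
  | .fnot R1 => transEs D VP P' R1
termination_by R => sizeOf R
end

/-- `⟪P⟫^G` correctly represents `⟦P⟧_{D(G_j)}` for every graph identifier `j`
of the dataset: for each `j` the tuples with graph attribute `j` are in
one-to-one multiplicity-preserving correspondence with the solution mappings
(`unb`, i.e. `none`, encoding that a variable is unbound). -/
def RepOK (D : Dataset) (P : Pattern) : Prop :=
  ∀ j ≤ nGraphs D, ∀ μ : SolMap, (transP D P).count (j, μ) = (evalPat D 0 j P).count μ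

/-!
`matchT` is left-to-right unification, so `matchT s p o tr = some μ` holds exactly when
`dom μ = var(t)` and `μ(t) = tr`; in particular `μ` determines `tr`. The relation `Quads` has
no duplicates, because graph identifiers are distinct and each graph is a set, so the
selection `⟪t⟫^G`, being the image of `Quads` under a partial map that is injective where
defined, has none either, and its part with `G = j` is the image of `G_j` under matching.
-/

theorem Multiset.card_filterMap_eq_card_filter {α β : Type*} (f : α → Option β)
    (s : Multiset α) :
    Multiset.card (s.filterMap f) = Multiset.card (s.filter fun a => (f a).isSome) := by
  induction s using Multiset.induction_on with
  | empty => rfl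
  | cons a s ih =>
    cases h : f a <;> simp [Multiset.filterMap_cons_none, Multiset.filterMap_cons_some, h, ih]

section SolutionMappings

variable {μ ν ρ : SolMap} {S : Finset Var} {v : Var} {c : TP} {a : RDFTerm}

theorem mem_dom : v ∈ dom μ ↔ μ v ≠ none := Finsupp.mem_support_iff

@[simp] theorem dom_zero : dom 0 = ∅ := rfl

theorem dom_update_some (μ : SolMap) (v : Var) (a : RDFTerm) :
    dom (Finsupp.update μ v (some a)) = insert v (dom μ) :=
  Finsupp.support_update_ne_zero _ _ (Option.some_ne_none a)

theorem restrict_apply (μ : SolMap) (S : Finset Var) (v : Var) :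
    restrict μ S v = if v ∈ S then μ v else none :=
  Finsupp.filter_apply _ _ _

theorem dom_restrict (μ : SolMap) (S : Finset Var) : dom (restrict μ S) = S ∩ dom μ := by
  ext v
  simp [dom, restrict, Finsupp.support_filter, and_comm]

theorem restrict_eq_self (h : dom μ ⊆ S) : restrict μ S = μ :=
  (Finsupp.filter_eq_self_iff _ _).mpr fun _ hv => h (Finsupp.mem_support_iff.mpr hv)

@[simp] theorem substTP_term : substTP μ (.term a) = .term a := rfl

@[simp] theorem substTP_var_eq_term_iff : substTP μ (.var v) = .term a ↔ μ v = some a := by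
  simp only [substTP]
  split <;> simp_all

def Extends (μ ν : SolMap) : Prop := ∀ v ∈ dom ν, μ v = ν v

theorem Extends.refl (μ : SolMap) : Extends μ μ := fun _ _ => rfl

theorem Extends.trans (h₁ : Extends μ ν) (h₂ : Extends ν ρ) : Extends μ ρ := fun v hv =>
  (h₁ v (mem_dom.mpr (h₂ v hv ▸ mem_dom.mp hv))).trans (h₂ v hv)

theorem Extends.eq_of_dom_subset (h : Extends μ ν) (hdom : dom μ ⊆ dom ν) : μ = ν := by
  refine Finsupp.ext fun v => ?_
  by_cases hv : v ∈ dom ν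
  · exact h v hv
  · rw [Finsupp.notMem_support_iff.mp (mt (@hdom v) hv), Finsupp.notMem_support_iff.mp hv]

theorem Extends.substTP_eq_term (h : Extends μ ν) (hc : substTP ν c = .term a) :
    substTP μ c = .term a := by
  cases c with
  | term => exact hc
  | var v =>
    rw [substTP_var_eq_term_iff] at hc ⊢
    rw [h v (mem_dom.mpr (by simp [hc])), hc]

end SolutionMappings

theorem unify_eq_some_iff {c : TP} {b : RDFTerm} {ν ν' : SolMap} :
    unify c b ν = some ν' ↔
      Extends ν' ν ∧ substTP ν' c = .term b ∧ dom ν' = varTP c ∪ dom ν := by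
  cases c with
  | term a =>
    simp only [unify, varTP, substTP_term, TP.term.injEq, Finset.empty_union]
    constructor
    · intro h
      split_ifs at h with hab
      cases h
      exact ⟨.refl _, hab, rfl⟩
    · rintro ⟨hext, rfl, hdom⟩
      rw [if_pos rfl, hext.eq_of_dom_subset hdom.le]
  | var v =>
    simp only [unify, varTP, substTP_var_eq_term_iff, ← Finset.insert_eq]
    cases hv : ν v with
    | none =>
      have hv' : v ∉ dom ν := fun h => mem_dom.mp h hv
      constructor
      · rintro ⟨⟩
        refine ⟨fun w hw => ?_, by simp, dom_update_some ..⟩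
        rw [Finsupp.update_apply, if_neg (ne_of_mem_of_not_mem hw hv')]
      · rintro ⟨hext, hb, hdom⟩
        refine congrArg some (Extends.eq_of_dom_subset (fun w hw => ?_) ?_).symm
        · rw [dom_update_some, Finset.mem_insert] at hw
          rcases hw with rfl | hw
          · simp [hb]
          · rw [Finsupp.update_apply, if_neg (ne_of_mem_of_not_mem hw hv'), hext w hw]
        · rw [dom_update_some, hdom]
    | some t =>
      have hv' : v ∈ dom ν := mem_dom.mpr (by simp [hv])
      simp only [Finset.insert_eq_of_mem hv']
      constructor
      · intro h
        split_ifs at h with htb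
        cases h
        exact ⟨.refl _, hv ▸ htb ▸ rfl, rfl⟩
      · rintro ⟨hext, hb, hdom⟩
        rw [hext v hv', hv, Option.some.injEq] at hb
        rw [if_pos hb, hext.eq_of_dom_subset hdom.le]

theorem unify_restrict {μ : SolMap} {c : TP} {b : RDFTerm} (S : Finset Var)
    (hc : substTP μ c = .term b) :
    unify c b (restrict μ S) = some (restrict μ (varTP c ∪ S)) := by
  have hvar : varTP c ⊆ dom μ := by
    cases c <;> simp_all [varTP, mem_dom]
  refine unify_eq_some_iff.mpr ⟨fun v hv => ?_, ?_, ?_⟩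
  · rw [dom_restrict] at hv
    simp [restrict_apply, (Finset.mem_inter.mp hv).1]
  · cases c <;> simp_all [restrict_apply, varTP]
  · rw [dom_restrict, dom_restrict, Finset.union_inter_distrib_right,
      Finset.inter_eq_left.mpr hvar]

theorem matchT_eq_some_iff {s p o : TP} {tr : Triple} {μ : SolMap} :
    matchT s p o tr = some μ ↔
      dom μ = varTP s ∪ varTP p ∪ varTP o ∧ substTP μ s = .term tr.1 ∧
        substTP μ p = .term tr.2.1 ∧ substTP μ o = .term tr.2.2 := by
  constructor
  · intro h
    obtain ⟨μ₁, h₁, μ₂, h₂, h₃⟩ : ∃ μ₁, unify s tr.1 0 = some μ₁ ∧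
        ∃ μ₂, unify p tr.2.1 μ₁ = some μ₂ ∧ unify o tr.2.2 μ₂ = some μ := by
      simpa [matchT, Option.bind_eq_some_iff] using h
    obtain ⟨-, hs, hd₁⟩ := unify_eq_some_iff.mp h₁
    obtain ⟨he₂, hp, hd₂⟩ := unify_eq_some_iff.mp h₂
    obtain ⟨he₃, ho, hd₃⟩ := unify_eq_some_iff.mp h₃
    refine ⟨?_, (he₃.trans he₂).substTP_eq_term hs, he₃.substTP_eq_term hp, ho⟩
    rw [hd₃, hd₂, hd₁, dom_zero, Finset.union_empty]
    ac_rfl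
  · rintro ⟨hdom, hs, hp, ho⟩
    -- the successive states of the unification are the restrictions of `μ` to the variables seen
    have h₀ : restrict μ ∅ = 0 := by
      rw [← Finsupp.support_eq_empty, ← dom, dom_restrict, Finset.empty_inter]
    have hμ : restrict μ (varTP o ∪ (varTP p ∪ (varTP s ∪ ∅))) = μ := by
      refine restrict_eq_self (hdom.trans ?_).le
      rw [Finset.union_empty]
      ac_rfl
    rw [matchT, ← h₀, unify_restrict _ hs, Option.bind_some, unify_restrict _ hp,
      Option.bind_some, unify_restrict _ ho, hμ]

theorem matchT_inj {s p o : TP} {tr tr' : Triple} {μ : SolMap}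
    (h : matchT s p o tr = some μ) (h' : matchT s p o tr' = some μ) : tr = tr' := by
  obtain ⟨-, hs, hp, ho⟩ := matchT_eq_some_iff.mp h
  obtain ⟨-, hs', hp', ho'⟩ := matchT_eq_some_iff.mp h'
  rw [hs, TP.term.injEq] at hs'
  rw [hp, TP.term.injEq] at hp'
  rw [ho, TP.term.injEq] at ho'
  exact Prod.ext hs' (Prod.ext hp' ho')

section Relations

variable {D : Dataset} {j : ℕ}

theorem graphAt_eq_empty_of_nGraphs_lt (h : nGraphs D < j) : graphAt D j = ∅ := by
  obtain ⟨k, rfl⟩ : ∃ k, j = k + 1 := Nat.exists_eq_add_one.mpr (Nat.zero_lt_of_lt h)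
  simp [graphAt, List.getElem?_eq_none (Nat.le_of_lt_succ h)]

theorem graphsRel_map_fst (D : Dataset) :
    (graphsRel D).map Prod.fst = Multiset.range (nGraphs D + 1) := by
  have : (namedEnum D).map Prod.fst = (List.range (nGraphs D)).map Nat.succ := by
    rw [namedEnum, List.map_map, List.range_eq_range', nGraphs, ← List.zipIdx_map_snd,
      List.map_map]
    rfl
  rw [graphsRel, Multiset.map_coe, List.map_cons, List.map_map, Multiset.range,
    List.range_succ_eq_map, ← this]
  rfl

theorem quadsRel_eq_bind_range (D : Dataset) :
    quadsRel D = (Multiset.range (nGraphs D + 1)).bind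
      fun j => (graphAt D j).val.map (Prod.mk j) := by
  rw [← graphsRel_map_fst, Multiset.bind_map]
  rfl

theorem mem_quadsRel {tr : Triple} : (j, tr) ∈ quadsRel D ↔ tr ∈ graphAt D j := by
  simp only [quadsRel_eq_bind_range, Multiset.mem_bind, Multiset.mem_range, Multiset.mem_map,
    Finset.mem_val, Prod.mk.injEq]
  constructor
  · rintro ⟨_, -, _, htr, rfl, rfl⟩
    exact htr
  · intro htr
    have hj : j < nGraphs D + 1 := Nat.lt_succ_of_le <| not_lt.mp fun hlt => by
      simp [graphAt_eq_empty_of_nGraphs_lt hlt] at htr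
    exact ⟨j, hj, tr, htr, rfl, rfl⟩

theorem nodup_quadsRel (D : Dataset) : (quadsRel D).Nodup := by
  rw [quadsRel_eq_bind_range, Multiset.nodup_bind]
  refine ⟨fun j _ => (graphAt D j).nodup.map (Prod.mk_right_injective j),
    (Multiset.nodup_range _).pairwise fun i _ j _ hij => Multiset.disjoint_left.mpr ?_⟩
  simp only [Multiset.mem_map, not_exists, not_and]
  rintro _ ⟨_, -, rfl⟩ _ - h
  exact hij (congrArg Prod.fst h).symm

end Relations

section TriplePatterns

variable {D : Dataset} {s p o : TP} {j : ℕ}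

theorem transP_triple (D : Dataset) (s p o : TP) :
    transP D (.triple s p o)
      = (quadsRel D).filterMap fun q => (matchT s p o q.2).map (Prod.mk q.1) := by
  rw [transP]

theorem mem_transP_triple {μ : SolMap} :
    (j, μ) ∈ transP D (.triple s p o) ↔ ∃ tr ∈ graphAt D j, matchT s p o tr = some μ := by
  simp only [transP_triple, Multiset.mem_filterMap, Option.map_eq_some_iff, Prod.mk.injEq]
  constructor
  · rintro ⟨⟨g, tr⟩, hq, μ, hμ, rfl, rfl⟩
    exact ⟨tr, mem_quadsRel.mp hq, hμ⟩
  · rintro ⟨tr, htr, hμ⟩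
    exact ⟨(j, tr), mem_quadsRel.mpr htr, μ, hμ, rfl, rfl⟩

theorem nodup_transP_triple (D : Dataset) (s p o : TP) : (transP D (.triple s p o)).Nodup := by
  rw [transP_triple]
  refine (nodup_quadsRel D).filterMap _ ?_
  simp only [Option.mem_def, Option.map_eq_some_iff]
  rintro ⟨g, tr⟩ ⟨g', tr'⟩ _ ⟨μ, hμ, rfl⟩ ⟨μ', hμ', h⟩
  obtain ⟨rfl, rfl⟩ := Prod.mk.inj h
  exact Prod.ext rfl (matchT_inj hμ hμ')

theorem filter_transP_triple :
    (transP D (.triple s p o)).filter (fun t => t.1 = j)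
      = ((graphAt D j).val.filterMap (matchT s p o)).map (Prod.mk j) := by
  refine ((nodup_transP_triple D s p o).filter _).ext
    (((graphAt D j).nodup.filterMap _ fun _ _ _ => matchT_inj).map
      (Prod.mk_right_injective j)) |>.mpr ?_
  rintro ⟨g, μ⟩
  simp only [Multiset.mem_filter, Multiset.mem_map, Multiset.mem_filterMap, Finset.mem_val,
    Prod.mk.injEq]
  constructor
  · rintro ⟨hμ, rfl⟩
    exact ⟨μ, mem_transP_triple.mp hμ, rfl, rfl⟩
  · rintro ⟨_, hμ, rfl, rfl⟩
    exact ⟨mem_transP_triple.mpr hμ, rfl⟩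

end TriplePatterns

/-- For a triple pattern `t = (s,p,o)` and any graph identifier
`j`, the tuples with `G`-attribute `j` in the bag-semantics evaluation of
`⟪t⟫^G` occur without duplicates and are in one-to-one correspondence with the
solution mappings `μ` such that `dom(μ) = var(t)` and `μ(t) ∈ G_j`; in
particular their number equals the number of triples of `G_j` matching `t`. -/
theorem triplePattern_correct (D : Dataset) (s p o : TP) (j : ℕ) :
    ((transP D (.triple s p o)).filter fun t => t.1 = j).Nodup
    ∧ (∀ μ : SolMap,
        (j, μ) ∈ transP D (.triple s p o) ↔
          (dom μ = varP (.triple s p o) ∧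
            ∃ a b c : RDFTerm, substTP μ s = .term a ∧ substTP μ p = .term b ∧
              substTP μ o = .term c ∧ (a, b, c) ∈ graphAt D j))
    ∧ Multiset.card ((transP D (.triple s p o)).filter fun t => t.1 = j)
        = ((graphAt D j).filter fun tr => (matchT s p o tr).isSome).card := by
  refine ⟨(nodup_transP_triple D s p o).filter _, fun μ => ?_, ?_⟩
  · simp only [mem_transP_triple, matchT_eq_some_iff, varP, Prod.exists]
    constructor
    · rintro ⟨a, b, c, hmem, hdom, hs, hp, ho⟩
      exact ⟨hdom, a, b, c, hs, hp, ho, hmem⟩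
    · rintro ⟨hdom, a, b, c, hs, hp, ho, hmem⟩
      exact ⟨a, b, c, hmem, hdom, hs, hp, ho⟩
  · rw [filter_transP_triple, Multiset.card_map, Multiset.card_filterMap_eq_card_filter]
    rfl

end
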